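/- arXiv:2603.29586 — 2 statements merged into one kernel-verified Lean document; each statement's English description precedes it below -/
import Mathlib

section
/- Let P_L have an atomless distribution, p_G ∈ ℝ, p < q, and define P_G = P_L − clip(P_L − p_G, p, q). Then ℙ(P_G = p_G) = F(q + p_G) − F(p + p_G), where F is the CDF of P_L. In particular, the distribution of P_G has an atom at p_G whenever F(q + p_G) > F(p + p_G). -/
open MeasureTheory

noncomputable def clip (x a b : ℝ) : ℝ := max a (min x b)

lemma clip_eq_self_iff {x a b : ℝ} (hab : a ≤ b) : clip x a b = x ↔ a ≤ x ∧ x ≤ b := by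
  unfold clip
  constructor
  · intro h
    rcases le_total x b with h1 | h1
    · rw [min_eq_left h1] at h
      exact ⟨h ▸ le_max_left _ _, h1⟩
    · rw [min_eq_right h1, max_eq_right hab] at h
      exact ⟨h ▸ hab, le_of_eq h.symm⟩
  · rintro ⟨h1, h2⟩
    rw [min_eq_left h2, max_eq_right h1]

theorem stmt_6 {Ω : Type*} [MeasurableSpace Ω] (μ : Measure Ω) [IsProbabilityMeasure μ]
    (P_L : Ω → ℝ) (hmeas : Measurable P_L) (p_G p q : ℝ) (hpq : p < q)
    (hatomless : ∀ x : ℝ, μ {ω | P_L ω = x} = 0)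
    (P_G : Ω → ℝ) (hPG : ∀ ω, P_G ω = P_L ω - clip (P_L ω - p_G) p q)
    (F : ℝ → ℝ) (hF : ∀ x, F x = (μ {ω | P_L ω ≤ x}).toReal) :
    (μ {ω | P_G ω = p_G}).toReal = F (q + p_G) - F (p + p_G) ∧
    (F (p + p_G) < F (q + p_G) → 0 < (μ {ω | P_G ω = p_G}).toReal) := by
  set a := p + p_G
  set b := q + p_G
  have hab : a ≤ b := by simp [a, b]; linarith
  have hset : {ω | P_G ω = p_G} = P_L ⁻¹' Set.Icc a b := by
    ext ω
    simp only [Set.mem_setOf_eq, Set.mem_preimage, Set.mem_Icc, hPG]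
    constructor
    · intro h
      have hc : clip (P_L ω - p_G) p q = P_L ω - p_G := by linarith
      have := (clip_eq_self_iff hpq.le).mp hc
      constructor <;> [skip; skip] <;> simp [a, b] <;> linarith [this.1, this.2]
    · rintro ⟨h1, h2⟩
      have hc : clip (P_L ω - p_G) p q = P_L ω - p_G := by
        apply (clip_eq_self_iff hpq.le).mpr
        constructor <;> simp [a, b] at h1 h2 ⊢ <;> linarith
      rw [hc]; ring
  -- μ {P_L < a} = μ {P_L ≤ a}
  have hIio : μ (P_L ⁻¹' Set.Iio a) = μ (P_L ⁻¹' Set.Iic a) := by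
    apply le_antisymm (measure_mono (fun ω (h : P_L ω < a) => le_of_lt h))
    have : P_L ⁻¹' Set.Iic a ⊆ P_L ⁻¹' Set.Iio a ∪ {ω | P_L ω = a} := by
      intro ω h
      have h' : P_L ω ≤ a := h
      rcases lt_or_eq_of_le h' with h'' | h''
      · exact Or.inl h''
      · exact Or.inr h''
    calc μ (P_L ⁻¹' Set.Iic a) ≤ μ (P_L ⁻¹' Set.Iio a ∪ {ω | P_L ω = a}) := measure_mono this
      _ ≤ μ (P_L ⁻¹' Set.Iio a) + μ {ω | P_L ω = a} := measure_union_le _ _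
      _ = μ (P_L ⁻¹' Set.Iio a) := by rw [hatomless a, add_zero]
  have hdiff : P_L ⁻¹' Set.Icc a b = P_L ⁻¹' Set.Iic b \ P_L ⁻¹' Set.Iio a := by
    ext ω
    simp only [Set.mem_preimage, Set.mem_Icc, Set.mem_diff, Set.mem_Iic, Set.mem_Iio, not_lt]
    tauto
  have hsub : P_L ⁻¹' Set.Iio a ⊆ P_L ⁻¹' Set.Iic b := fun ω h => le_trans (le_of_lt h) hab
  have hfin : μ (P_L ⁻¹' Set.Iio a) ≠ ⊤ := measure_ne_top μ _
  have hmeasIio : MeasurableSet (P_L ⁻¹' Set.Iio a) := hmeas measurableSet_Iio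
  have hmain : μ {ω | P_G ω = p_G} = μ (P_L ⁻¹' Set.Iic b) - μ (P_L ⁻¹' Set.Iic a) := by
    rw [hset, hdiff, measure_diff hsub hmeasIio.nullMeasurableSet hfin, hIio]
  have hle : μ (P_L ⁻¹' Set.Iic a) ≤ μ (P_L ⁻¹' Set.Iic b) :=
    measure_mono (fun ω h => le_trans h hab)
  have hFb : F b = (μ (P_L ⁻¹' Set.Iic b)).toReal := hF b
  have hFa : F a = (μ (P_L ⁻¹' Set.Iic a)).toReal := hF a
  have h1 : (μ {ω | P_G ω = p_G}).toReal = F b - F a := by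
    rw [hmain, ENNReal.toReal_sub_of_le hle (measure_ne_top μ _), hFb, hFa]
  exact ⟨h1, fun h => by rw [h1]; linarith⟩
end

section
/- Let P_L have CDF F, p_G ∈ ℝ, p ≤ q, and P_G = P_L − clip(P_L − p_G, p, q). Then the CDF F_G of P_G satisfies F_G(t) = F(t + p) for t < p_G and F_G(t) = F(t + q) for t ≥ p_G. -/
open MeasureTheory

/- Once `x - c > p`, the left side equals `max c (x - q) ≥ c > t` and `x > t + p`, so both sides
fail together; only the lower bound `p` matters. -/
lemma sub_clip_sub_le_iff_of_lt {x c p q t : ℝ} (hpq : p ≤ q) (ht : t < c) :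
    x - clip (x - c) p q ≤ t ↔ x ≤ t + p := by
  simp only [clip, max_def, min_def]
  split_ifs <;> constructor <;> intro <;> linarith

lemma sub_clip_sub_le_iff_of_le {x c p q t : ℝ} (hpq : p ≤ q) (ht : c ≤ t) :
    x - clip (x - c) p q ≤ t ↔ x ≤ t + q := by
  simp only [clip, max_def, min_def]
  split_ifs <;> constructor <;> intro <;> linarith

theorem stmt_18_general {Ω : Type*} [MeasurableSpace Ω] (μ : Measure Ω)
    (P_L : Ω → ℝ) (p_G p q : ℝ) (hpq : p ≤ q)
    (P_G : Ω → ℝ) (hPG : ∀ ω, P_G ω = P_L ω - clip (P_L ω - p_G) p q)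
    (F F_G : ℝ → ℝ)
    (hF : ∀ x, F x = (μ {ω | P_L ω ≤ x}).toReal)
    (hFG : ∀ t, F_G t = (μ {ω | P_G ω ≤ t}).toReal) :
    (∀ t, t < p_G → F_G t = F (t + p)) ∧ (∀ t, p_G ≤ t → F_G t = F (t + q)) := by
  refine ⟨fun t ht => ?_, fun t ht => ?_⟩
  · simp only [hFG, hF, hPG, sub_clip_sub_le_iff_of_lt hpq ht]
  · simp only [hFG, hF, hPG, sub_clip_sub_le_iff_of_le hpq ht]

theorem stmt_18 {Ω : Type*} [MeasurableSpace Ω] (μ : Measure Ω) [IsProbabilityMeasure μ]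
    (P_L : Ω → ℝ) (hmeas : Measurable P_L) (p_G p q : ℝ) (hpq : p ≤ q)
    (P_G : Ω → ℝ) (hPG : ∀ ω, P_G ω = P_L ω - clip (P_L ω - p_G) p q)
    (F F_G : ℝ → ℝ)
    (hF : ∀ x, F x = (μ {ω | P_L ω ≤ x}).toReal)
    (hFG : ∀ t, F_G t = (μ {ω | P_G ω ≤ t}).toReal) :
    (∀ t, t < p_G → F_G t = F (t + p)) ∧ (∀ t, p_G ≤ t → F_G t = F (t + q)) :=
  stmt_18_general μ P_L p_G p q hpq P_G hPG F F_G hF hFG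
end
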